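/- Let ε, β > 0, let u be an admissible solution of (★), and assume ‖u(0,·)‖²_{L²(ℝ)} + β‖∂_x u(0,·)‖²_{L²(ℝ)} + β²‖∂_x² u(0,·)‖²_{L²(ℝ)} ≤ C₀. Then for every t > 0 and x ∈ ℝ: u(t,x)² ≤ 2‖u(t,·)‖_{L²(ℝ)}‖∂_x u(t,·)‖_{L²(ℝ)}, and consequently ‖u(t,·)‖_{L^∞(ℝ)} ≤ (2C₀)^{1/2} β^{−1/4}. -/

import Mathlib

open MeasureTheory Real Filter Set

noncomputable section

/-- `mixedD u j k t x`: `j` time derivatives of the `k`-th spatial derivative of `u` at `(t,x)`. -/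
def mixedD (u : ℝ → ℝ → ℝ) (j k : ℕ) (t x : ℝ) : ℝ :=
  iteratedDeriv j (fun s => iteratedDeriv k (fun y => u s y) x) t

/-- Squared `L²` norm in the space variable. -/
def sqL2 (f : ℝ → ℝ) : ℝ := ∫ x : ℝ, (f x) ^ 2

/-- `L²` norm in the space variable. -/
def nL2 (f : ℝ → ℝ) : ℝ := Real.sqrt (∫ x : ℝ, (f x) ^ 2)

/-- `L⁴` norm in the space variable. -/
def nL4 (f : ℝ → ℝ) : ℝ := (∫ x : ℝ, (f x) ^ 4) ^ ((1 : ℝ) / 4)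

/-- Admissible solution of the Rosenau–KdV–RLW approximation (★). -/
structure IsAdmissibleKdVRLW (ε β : ℝ) (u : ℝ → ℝ → ℝ) : Prop where
  smooth : ContDiff ℝ (⊤ : ℕ∞) (fun p : ℝ × ℝ => u p.1 p.2)
  pde : ∀ t > (0 : ℝ), ∀ x : ℝ,
    mixedD u 1 0 t x + deriv (fun y => (u t y) ^ 2) x
      + β * mixedD u 0 3 t x - β * mixedD u 1 2 t x
      + β ^ 2 * mixedD u 1 4 t x = ε * mixedD u 0 2 t x
  sq_int : ∀ T > (0 : ℝ), ∀ j k : ℕ, j + k ≤ 5 → ∀ t ∈ Set.Icc (0 : ℝ) T,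
    MeasureTheory.Integrable (fun x : ℝ => (mixedD u j k t x) ^ 2)
  decay : ∀ T > (0 : ℝ), ∀ j k : ℕ, j + k ≤ 5 → ∀ δ > (0 : ℝ), ∃ M : ℝ,
    ∀ x : ℝ, M ≤ |x| → ∀ t ∈ Set.Icc (0 : ℝ) T, |mixedD u j k t x| ≤ δ

/-- Admissible solution of the Rosenau–RLW approximation (★★). -/
structure IsAdmissibleRLW (ε β : ℝ) (u : ℝ → ℝ → ℝ) : Prop where
  smooth : ContDiff ℝ (⊤ : ℕ∞) (fun p : ℝ × ℝ => u p.1 p.2)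
  pde : ∀ t > (0 : ℝ), ∀ x : ℝ,
    mixedD u 1 0 t x + deriv (fun y => (u t y) ^ 2) x
      - β * mixedD u 1 2 t x + β ^ 2 * mixedD u 1 4 t x = ε * mixedD u 0 2 t x
  sq_int : ∀ T > (0 : ℝ), ∀ j k : ℕ, j + k ≤ 5 → ∀ t ∈ Set.Icc (0 : ℝ) T,
    MeasureTheory.Integrable (fun x : ℝ => (mixedD u j k t x) ^ 2)
  decay : ∀ T > (0 : ℝ), ∀ j k : ℕ, j + k ≤ 5 → ∀ δ > (0 : ℝ), ∃ M : ℝ,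
    ∀ x : ℝ, M ≤ |x| → ∀ t ∈ Set.Icc (0 : ℝ) T, |mixedD u j k t x| ≤ δ

/-- Data bounds with constant `C0` for the (★) approximation. -/
def DataBoundsKdVRLW (ε β C0 : ℝ) (f : ℝ → ℝ) : Prop :=
  (∫ x : ℝ, (f x) ^ 2) + (∫ x : ℝ, (f x) ^ 4)
      + (β + ε ^ 2) * (∫ x : ℝ, (deriv f x) ^ 2) ≤ C0 ∧
  (β * ε + β * ε ^ 2 + β ^ 2) * (∫ x : ℝ, (iteratedDeriv 2 f x) ^ 2)
      + (β ^ 2 * ε ^ 2 + β ^ 3) * (∫ x : ℝ, (iteratedDeriv 3 f x) ^ 2) ≤ C0 ∧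
  β ^ 4 * (∫ x : ℝ, (iteratedDeriv 4 f x) ^ 2) ≤ C0

/-- Data bounds with constant `C0` for the (★★) approximation. -/
def DataBoundsRLW (ε β C0 : ℝ) (f : ℝ → ℝ) : Prop :=
  (∫ x : ℝ, (f x) ^ 2) + (∫ x : ℝ, (f x) ^ 4)
    + β * ε ^ 2 * (∫ x : ℝ, (iteratedDeriv 2 f x) ^ 2) ≤ C0

/-- `u ∈ L^∞((0,∞); L²(ℝ) ∩ L⁴(ℝ))`. -/
def BddL2L4 (u : ℝ → ℝ → ℝ) : Prop :=
  ∃ M : ℝ, ∀ t > (0 : ℝ), (∫ x : ℝ, (u t x) ^ 2) ≤ M ∧ (∫ x : ℝ, (u t x) ^ 4) ≤ M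

/-- Entropy solution of `∂ₜ u + ∂ₓ (u²) = 0` with initial datum `u0`. -/
def IsEntropySolution (u : ℝ → ℝ → ℝ) (u0 : ℝ → ℝ) : Prop :=
  ∀ η : ℝ → ℝ, ContDiff ℝ 2 η → ConvexOn ℝ Set.univ η →
    (∃ M : ℝ, ∀ v : ℝ, |deriv η v| ≤ M) →
    ∀ φ : ℝ → ℝ → ℝ, ContDiff ℝ (⊤ : ℕ∞) (fun p : ℝ × ℝ => φ p.1 p.2) →
      HasCompactSupport (fun p : ℝ × ℝ => φ p.1 p.2) →
      (∀ t x : ℝ, 0 ≤ φ t x) →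
      0 ≤ (∫ t in Set.Ioi (0 : ℝ), ∫ x : ℝ,
            (η (u t x) * deriv (fun s => φ s x) t
              + (∫ ξ in (0 : ℝ)..(u t x), 2 * ξ * deriv η ξ) * deriv (fun y => φ t y) x))
          + ∫ x : ℝ, η (u0 x) * φ 0 x

namespace RKdV
open Topology


def pd (v : ℝ × ℝ) (F : ℝ × ℝ → ℝ) : ℝ × ℝ → ℝ := fun p => fderiv ℝ F p v

lemma pd_smooth {F : ℝ × ℝ → ℝ} (hF : ContDiff ℝ (⊤ : ℕ∞) F) (v : ℝ × ℝ) :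
    ContDiff ℝ (⊤ : ℕ∞) (pd v F) :=
  (hF.fderiv_right (by simp)).clm_apply contDiff_const

lemma hasDerivAt_slice_x {F : ℝ × ℝ → ℝ} (hF : ContDiff ℝ (⊤ : ℕ∞) F) (t x : ℝ) :
    HasDerivAt (fun y => F (t, y)) (pd (0,1) F (t, x)) x := by
  have h1 : HasDerivAt (fun y : ℝ => ((t, y) : ℝ × ℝ)) ((0 : ℝ), (1 : ℝ)) x :=
    (hasDerivAt_const x t).prodMk (hasDerivAt_id x)
  have h2 := (hF.differentiable (by simp) (t, x)).hasFDerivAt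
  exact h2.comp_hasDerivAt x h1

lemma hasDerivAt_slice_t {F : ℝ × ℝ → ℝ} (hF : ContDiff ℝ (⊤ : ℕ∞) F) (t x : ℝ) :
    HasDerivAt (fun s => F (s, x)) (pd (1,0) F (t, x)) t := by
  have h1 : HasDerivAt (fun s : ℝ => ((s, x) : ℝ × ℝ)) ((1 : ℝ), (0 : ℝ)) t :=
    (hasDerivAt_id t).prodMk (hasDerivAt_const t x)
  have h2 := (hF.differentiable (by simp) (t, x)).hasFDerivAt
  exact h2.comp_hasDerivAt t h1

lemma pd_comm {F : ℝ × ℝ → ℝ} (hF : ContDiff ℝ (⊤ : ℕ∞) F) (v w : ℝ × ℝ) :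
    pd v (pd w F) = pd w (pd v F) := by
  funext p
  have hdF : Differentiable ℝ (fderiv ℝ F) :=
    (hF.fderiv_right (n := (⊤ : ℕ∞)) (m := (⊤ : ℕ∞)) (by simp)).differentiable (by simp)
  have hsymm : IsSymmSndFDerivAt ℝ F p :=
    hF.contDiffAt.isSymmSndFDerivAt (by simp; exact WithTop.coe_le_coe.mpr (le_top : ((2:ℕ∞)) ≤ ⊤))
  have key : ∀ a b : ℝ × ℝ, pd a (pd b F) p = fderiv ℝ (fderiv ℝ F) p a b := by
    intro a b
    have : pd b F = fun q => (fderiv ℝ F q) b := rfl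
    rw [pd, this]
    rw [show (fun q => (fderiv ℝ F q) b) = (fun q => (fderiv ℝ F q) ((fun _ => b) q)) from rfl]
    rw [fderiv_clm_apply (hdF p) (differentiableAt_const b)]
    simp
  rw [key, key, hsymm.eq]




lemma pd_iter_smooth {F : ℝ × ℝ → ℝ} (hF : ContDiff ℝ (⊤ : ℕ∞) F) (v : ℝ × ℝ) (n : ℕ) :
    ContDiff ℝ (⊤ : ℕ∞) ((pd v)^[n] F) := by
  induction n generalizing F with
  | zero => exact hF
  | succ n ih => rw [Function.iterate_succ_apply]; exact ih (pd_smooth hF v)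

variable {u : ℝ → ℝ → ℝ}

lemma sliceK (hu : ContDiff ℝ (⊤ : ℕ∞) (fun p : ℝ × ℝ => u p.1 p.2)) (k : ℕ) (t x : ℝ) :
    iteratedDeriv k (fun y => u t y) x
      = ((pd (0,1))^[k] (fun p : ℝ × ℝ => u p.1 p.2)) (t, x) := by
  induction k generalizing x with
  | zero => simp
  | succ k ih =>
    rw [iteratedDeriv_succ]
    have hfun : iteratedDeriv k (fun y => u t y)
        = fun y => ((pd (0,1))^[k] (fun p : ℝ × ℝ => u p.1 p.2)) (t, y) := funext fun y => ih y
    rw [hfun, Function.iterate_succ_apply']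
    exact (hasDerivAt_slice_x (pd_iter_smooth hu _ k) t x).deriv

lemma mixedD_eq_pd (hu : ContDiff ℝ (⊤ : ℕ∞) (fun p : ℝ × ℝ => u p.1 p.2)) (j k : ℕ) (t x : ℝ) :
    mixedD u j k t x
      = ((pd (1,0))^[j] ((pd (0,1))^[k] (fun p : ℝ × ℝ => u p.1 p.2))) (t, x) := by
  induction j generalizing t with
  | zero => simpa [mixedD] using sliceK hu k t x
  | succ j ih =>
    have : mixedD u (j+1) k t x = deriv (fun s => mixedD u j k s x) t := by
      simp only [mixedD, iteratedDeriv_succ]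
    rw [this]
    have hfun : (fun s => mixedD u j k s x)
        = fun s => ((pd (1,0))^[j] ((pd (0,1))^[k] (fun p : ℝ × ℝ => u p.1 p.2))) (s, x) :=
      funext fun s => ih s
    rw [hfun, Function.iterate_succ_apply']
    exact (hasDerivAt_slice_t (pd_iter_smooth (pd_iter_smooth hu _ k) _ j) t x).deriv

lemma pd_px_iterate {F : ℝ × ℝ → ℝ} (hF : ContDiff ℝ (⊤ : ℕ∞) F) (j : ℕ) :
    pd (0,1) ((pd (1,0))^[j] F) = (pd (1,0))^[j] (pd (0,1) F) := by
  induction j generalizing F with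
  | zero => rfl
  | succ j ih =>
    rw [Function.iterate_succ_apply, Function.iterate_succ_apply,
      ih (pd_smooth hF _), pd_comm hF]

lemma mixedD_smooth (hu : ContDiff ℝ (⊤ : ℕ∞) (fun p : ℝ × ℝ => u p.1 p.2)) (j k : ℕ) :
    ContDiff ℝ (⊤ : ℕ∞) (fun p : ℝ × ℝ => mixedD u j k p.1 p.2) := by
  have : (fun p : ℝ × ℝ => mixedD u j k p.1 p.2)
      = (pd (1,0))^[j] ((pd (0,1))^[k] (fun p : ℝ × ℝ => u p.1 p.2)) :=
    funext fun p => mixedD_eq_pd hu j k p.1 p.2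
  rw [this]
  exact pd_iter_smooth (pd_iter_smooth hu _ k) _ j

lemma hasDerivAt_mixedD_t (hu : ContDiff ℝ (⊤ : ℕ∞) (fun p : ℝ × ℝ => u p.1 p.2)) (j k : ℕ) (t x : ℝ) :
    HasDerivAt (fun s => mixedD u j k s x) (mixedD u (j+1) k t x) t := by
  have hfun : (fun s => mixedD u j k s x)
      = fun s => ((pd (1,0))^[j] ((pd (0,1))^[k] (fun p : ℝ × ℝ => u p.1 p.2))) (s, x) :=
    funext fun s => mixedD_eq_pd hu j k s x
  rw [hfun, mixedD_eq_pd hu (j+1) k t x, Function.iterate_succ_apply']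
  exact hasDerivAt_slice_t (pd_iter_smooth (pd_iter_smooth hu _ k) _ j) t x

lemma hasDerivAt_mixedD_x (hu : ContDiff ℝ (⊤ : ℕ∞) (fun p : ℝ × ℝ => u p.1 p.2)) (j k : ℕ) (t x : ℝ) :
    HasDerivAt (fun y => mixedD u j k t y) (mixedD u j (k+1) t x) x := by
  have hfun : (fun y => mixedD u j k t y)
      = fun y => ((pd (1,0))^[j] ((pd (0,1))^[k] (fun p : ℝ × ℝ => u p.1 p.2))) (t, y) :=
    funext fun y => mixedD_eq_pd hu j k t y
  have hval : mixedD u j (k+1) t x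
      = pd (0,1) ((pd (1,0))^[j] ((pd (0,1))^[k] (fun p : ℝ × ℝ => u p.1 p.2))) (t, x) := by
    rw [mixedD_eq_pd hu j (k+1) t x, Function.iterate_succ_apply',
      ← pd_px_iterate (pd_iter_smooth hu _ k) j]
  rw [hfun, hval]
  exact hasDerivAt_slice_x (pd_iter_smooth (pd_iter_smooth hu _ k) _ j) t x

lemma mixedD_continuous (hu : ContDiff ℝ (⊤ : ℕ∞) (fun p : ℝ × ℝ => u p.1 p.2)) (j k : ℕ) :
    Continuous (fun p : ℝ × ℝ => mixedD u j k p.1 p.2) :=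
  (mixedD_smooth hu j k).continuous

lemma mixedD_zero_zero (t x : ℝ) : mixedD u 0 0 t x = u t x := by simp [mixedD]



/-- Elementary Cauchy–Schwarz for integrals of continuous functions. -/
lemma integral_abs_mul_le (f g : ℝ → ℝ) (hf : Continuous f) (hg : Continuous g)
    (hf2 : Integrable (fun x => f x ^ 2)) (hg2 : Integrable (fun x => g x ^ 2)) :
    (∫ x, |f x * g x|) ≤ Real.sqrt (∫ x, f x ^ 2) * Real.sqrt (∫ x, g x ^ 2) := by
  set A := ∫ x, f x ^ 2 with hA
  set B := ∫ x, g x ^ 2 with hB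
  have hA0 : 0 ≤ A := integral_nonneg fun x => sq_nonneg _
  have hB0 : 0 ≤ B := integral_nonneg fun x => sq_nonneg _
  have hpt : ∀ (c : ℝ), 0 < c → ∀ x, 2 * c * |f x * g x| ≤ c ^ 2 * f x ^ 2 + g x ^ 2 := by
    intro c hc x
    rw [abs_mul]
    nlinarith [sq_nonneg (c * |f x| - |g x|), sq_abs (f x), sq_abs (g x),
      abs_nonneg (f x), abs_nonneg (g x)]
  have habs : Integrable (fun x => |f x * g x|) := by
    refine (Integrable.mono' (((hf2.const_mul 1).add hg2).div_const 2)
      ((hf.mul hg).aestronglyMeasurable) (Eventually.of_forall fun x => ?_)).abs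
    simp only [norm_eq_abs, abs_abs, Pi.add_apply, Pi.mul_apply]
    have := hpt 1 one_pos x
    linarith
  set I := ∫ x, |f x * g x| with hI
  have hI0 : 0 ≤ I := integral_nonneg fun x => abs_nonneg _
  have key : ∀ c : ℝ, 0 < c → 2 * c * I ≤ c ^ 2 * A + B := by
    intro c hc
    have h1 : (∫ x, 2 * c * |f x * g x|) ≤ ∫ x, c ^ 2 * f x ^ 2 + g x ^ 2 :=
      integral_mono (habs.const_mul _) ((hf2.const_mul _).add hg2) (hpt c hc)
    rwa [integral_const_mul, integral_add (hf2.const_mul _) hg2, integral_const_mul] at h1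
  rcases eq_or_lt_of_le hI0 with hI0' | hIpos
  · rw [← hI0']; positivity
  rcases eq_or_lt_of_le hA0 with hA0' | hApos
  · exfalso
    have hc : (0:ℝ) < (B + 1) / (2 * I) := by positivity
    have := key _ hc
    rw [← hA0'] at this
    have he : 2 * ((B + 1) / (2 * I)) * I = B + 1 := by field_simp
    nlinarith
  rcases eq_or_lt_of_le hB0 with hB0' | hBpos
  · exfalso
    have hc : (0:ℝ) < I / A := by positivity
    have hk := key _ hc
    rw [← hB0'] at hk
    have he : (I / A) ^ 2 * A = I ^ 2 / A := by field_simp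
    rw [he] at hk
    have h8 : 2 * (I / A) * I = 2 * (I ^ 2 / A) := by ring
    rw [h8] at hk
    have hpos : 0 < I ^ 2 / A := div_pos (by positivity) hApos
    linarith
  · have hsA : Real.sqrt A * Real.sqrt A = A := Real.mul_self_sqrt hA0
    have hsB : Real.sqrt B * Real.sqrt B = B := Real.mul_self_sqrt hB0
    have hsA0 : 0 < Real.sqrt A := Real.sqrt_pos.mpr hApos
    have hsB0 : 0 < Real.sqrt B := Real.sqrt_pos.mpr hBpos
    have hc : (0:ℝ) < Real.sqrt B / Real.sqrt A := by positivity
    have := key _ hc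
    have he : (Real.sqrt B / Real.sqrt A) ^ 2 * A = B := by
      rw [div_pow]; rw [sq_sqrt hB0, sq_sqrt hA0]; field_simp
    rw [he] at this
    -- this : 2 * (√B/√A) * I ≤ 2 B
    have h2 : Real.sqrt B * I ≤ B * Real.sqrt A := by
      have h3 : 2 * (Real.sqrt B / Real.sqrt A) * I * Real.sqrt A
          ≤ (B + B) * Real.sqrt A := by nlinarith
      have h4 : 2 * (Real.sqrt B / Real.sqrt A) * I * Real.sqrt A
          = 2 * (Real.sqrt B * I) := by field_simp
      nlinarith
    nlinarith

/-- Agmon-type inequality. -/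
lemma agmon (f g : ℝ → ℝ) (hf : Continuous f) (hg : Continuous g)
    (hder : ∀ y, HasDerivAt f (g y) y)
    (hf2 : Integrable (fun y => f y ^ 2)) (hg2 : Integrable (fun y => g y ^ 2))
    (hdecay : Tendsto f atBot (nhds 0)) (x : ℝ) :
    f x ^ 2 ≤ 2 * Real.sqrt (∫ y, f y ^ 2) * Real.sqrt (∫ y, g y ^ 2) := by
  have hfg : Integrable (fun y => f y * g y) := by
    refine Integrable.mono' (((hf2.add hg2)).div_const 2) ((hf.mul hg).aestronglyMeasurable)
      (Eventually.of_forall fun y => ?_)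
    simp only [norm_eq_abs, abs_mul, Pi.add_apply]
    nlinarith [sq_nonneg (|f y| - |g y|), sq_abs (f y), sq_abs (g y), abs_nonneg (f y),
      abs_nonneg (g y)]
  have hder2 : ∀ y ∈ Iic x, HasDerivAt (fun y => f y ^ 2) (2 * (f y * g y)) y := by
    intro y _
    have h := (hder y).pow 2
    norm_num at h
    refine h.congr_deriv ?_
    ring
  have hTend : Tendsto (fun y => f y ^ 2) atBot (nhds 0) := by
    have h := hdecay.mul hdecay
    rw [mul_zero] at h
    simpa [pow_two] using h
  have hFTC := integral_Iic_of_hasDerivAt_of_tendsto' hder2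
    ((hfg.const_mul 2).integrableOn) hTend
  rw [sub_zero] at hFTC
  have h1 : f x ^ 2 ≤ ∫ y, |2 * (f y * g y)| := by
    rw [← hFTC]
    calc (∫ y in Iic x, 2 * (f y * g y)) ≤ ∫ y in Iic x, |2 * (f y * g y)| := by
          refine setIntegral_mono_on ((hfg.const_mul 2).integrableOn)
            (((hfg.const_mul 2).abs).integrableOn) measurableSet_Iic
            (fun y _ => le_abs_self _)
      _ ≤ ∫ y, |2 * (f y * g y)| :=
          setIntegral_le_integral ((hfg.const_mul 2).abs)
            (Eventually.of_forall fun y => abs_nonneg _)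
  calc f x ^ 2 ≤ ∫ y, |2 * (f y * g y)| := h1
    _ = 2 * ∫ y, |f y * g y| := by
        rw [← integral_const_mul]
        congr 1; funext y; rw [abs_mul]; norm_num
    _ ≤ 2 * (Real.sqrt (∫ y, f y ^ 2) * Real.sqrt (∫ y, g y ^ 2)) := by
        have := integral_abs_mul_le f g hf hg hf2 hg2
        linarith
    _ = _ := by ring



variable {u : ℝ → ℝ → ℝ}

lemma mixedD_continuous_t (hu : ContDiff ℝ (⊤ : ℕ∞) (fun p : ℝ × ℝ => u p.1 p.2)) (j k : ℕ) (x : ℝ) :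
    Continuous (fun s => mixedD u j k s x) :=
  (mixedD_continuous hu j k).comp (continuous_id.prodMk continuous_const)

lemma mixedD_continuous_x (hu : ContDiff ℝ (⊤ : ℕ∞) (fun p : ℝ × ℝ => u p.1 p.2)) (j k : ℕ) (s : ℝ) :
    Continuous (fun x => mixedD u j k s x) :=
  (mixedD_continuous hu j k).comp (continuous_const.prodMk continuous_id)

/-- Uniform bound on a time slab. -/
lemma unif_bound (hu : ContDiff ℝ (⊤ : ℕ∞) (fun p : ℝ × ℝ => u p.1 p.2))
    (hdec : ∀ T > (0 : ℝ), ∀ j k : ℕ, j + k ≤ 5 → ∀ δ > (0 : ℝ), ∃ M : ℝ,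
      ∀ x : ℝ, M ≤ |x| → ∀ t ∈ Set.Icc (0 : ℝ) T, |mixedD u j k t x| ≤ δ)
    {T : ℝ} (hT : 0 < T) (j k : ℕ) (hjk : j + k ≤ 5) :
    ∃ K : ℝ, 1 ≤ K ∧ ∀ s ∈ Icc (0:ℝ) T, ∀ x : ℝ, |mixedD u j k s x| ≤ K := by
  obtain ⟨M, hM⟩ := hdec T hT j k hjk 1 one_pos
  have hSc : IsCompact (Icc (0:ℝ) T ×ˢ Icc (-(|M|+1)) (|M|+1)) :=
    isCompact_Icc.prod isCompact_Icc
  obtain ⟨C, hC⟩ := hSc.exists_bound_of_continuousOn ((mixedD_continuous hu j k).continuousOn)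
  refine ⟨max C 1, le_max_right _ _, fun s hs x => ?_⟩
  by_cases hx : |x| ≤ |M| + 1
  · have hmem : ((s, x) : ℝ × ℝ) ∈ Icc (0:ℝ) T ×ˢ Icc (-(|M|+1)) (|M|+1) :=
      ⟨hs, (abs_le.mp hx).1, (abs_le.mp hx).2⟩
    have := hC _ hmem
    rw [Real.norm_eq_abs] at this
    exact this.trans (le_max_left _ _)
  · push_neg at hx
    have hMx : M ≤ |x| := le_trans (le_trans (le_abs_self M) (by linarith)) hx.le
    exact (hM x hMx s hs).trans (le_max_right _ _)

/-- The PDE, in solved form, extended to `s = 0` by continuity. -/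
lemma pde_solved {ε β : ℝ}
    (hu : ContDiff ℝ (⊤ : ℕ∞) (fun p : ℝ × ℝ => u p.1 p.2))
    (hpde : ∀ t > (0 : ℝ), ∀ x : ℝ,
      mixedD u 1 0 t x + deriv (fun y => (u t y) ^ 2) x
        + β * mixedD u 0 3 t x - β * mixedD u 1 2 t x
        + β ^ 2 * mixedD u 1 4 t x = ε * mixedD u 0 2 t x)
    {s : ℝ} (hs : 0 ≤ s) (x : ℝ) :
    mixedD u 1 0 s x = ε * mixedD u 0 2 s x - 2 * mixedD u 0 0 s x * mixedD u 0 1 s x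
      - β * mixedD u 0 3 s x + β * mixedD u 1 2 s x - β ^ 2 * mixedD u 1 4 s x := by
  have hderiv_sq : ∀ σ x', deriv (fun y => (u σ y) ^ 2) x'
      = 2 * mixedD u 0 0 σ x' * mixedD u 0 1 σ x' := by
    intro σ x'
    have h1 : (fun y => (u σ y) ^ 2) = fun y => (mixedD u 0 0 σ y) ^ 2 := by
      funext y; rw [mixedD_zero_zero]
    rw [h1]
    have h2 := ((hasDerivAt_mixedD_x hu 0 0 σ x').pow 2).deriv
    rw [show (fun y => mixedD u 0 0 σ y ^ 2) = (fun y => mixedD u 0 0 σ y) ^ 2 from rfl, h2]; push_cast; ring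
  have key : ∀ σ : ℝ, 0 < σ → mixedD u 1 0 σ x = ε * mixedD u 0 2 σ x
      - 2 * mixedD u 0 0 σ x * mixedD u 0 1 σ x
      - β * mixedD u 0 3 σ x + β * mixedD u 1 2 σ x - β ^ 2 * mixedD u 1 4 σ x := by
    intro σ hσ
    have := hpde σ hσ x
    rw [hderiv_sq σ x] at this
    linarith
  rcases lt_or_eq_of_le hs with hs' | hs'
  · exact key s hs'
  · rw [← hs']
    set f : ℝ → ℝ := fun σ => mixedD u 1 0 σ x - (ε * mixedD u 0 2 σ x
      - 2 * mixedD u 0 0 σ x * mixedD u 0 1 σ x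
      - β * mixedD u 0 3 σ x + β * mixedD u 1 2 σ x - β ^ 2 * mixedD u 1 4 σ x) with hf
    have hcont : Continuous f := by
      refine (mixedD_continuous_t hu 1 0 x).sub ?_
      refine ((((continuous_const.mul (mixedD_continuous_t hu 0 2 x)).sub
        ((continuous_const.mul (mixedD_continuous_t hu 0 0 x)).mul
          (mixedD_continuous_t hu 0 1 x))).sub
        (continuous_const.mul (mixedD_continuous_t hu 0 3 x))).add
        (continuous_const.mul (mixedD_continuous_t hu 1 2 x))).sub
        (continuous_const.mul (mixedD_continuous_t hu 1 4 x))
    have h1 : Tendsto f (𝓝[>] (0:ℝ)) (𝓝 (f 0)) :=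
      (hcont.tendsto 0).mono_left nhdsWithin_le_nhds
    have h2 : f =ᶠ[𝓝[>] (0:ℝ)] (fun _ => 0) :=
      eventually_nhdsWithin_of_forall (fun σ hσ => by
        have := key σ hσ
        simp only [hf]
        linarith)
    have h3 : Tendsto f (𝓝[>] (0:ℝ)) (𝓝 0) := Tendsto.congr' h2.symm tendsto_const_nhds
    have h4 : f 0 = 0 := tendsto_nhds_unique h1 h3
    simp only [hf] at h4
    linarith


lemma abs_mul_le' {a b A B : ℝ} (ha : |a| ≤ A) (hb : |b| ≤ B) : |a * b| ≤ A * B := by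
  rw [abs_mul]
  exact mul_le_mul ha hb (abs_nonneg _) ((abs_nonneg a).trans ha)

lemma scale_bound {c p P : ℝ} (hc : 0 ≤ c) (hp : |p| ≤ P) : -(c * P) ≤ c * p ∧ c * p ≤ c * P := by
  obtain ⟨h1, h2⟩ := abs_le.mp hp
  constructor <;> nlinarith

attribute [local irreducible] mixedD

set_option maxHeartbeats 1000000 in
/-- Energy monotonicity. -/
lemma energy_mono {ε β : ℝ} (hε : 0 < ε) (hβ : 0 < β)
    (hu : ContDiff ℝ (⊤ : ℕ∞) (fun p : ℝ × ℝ => u p.1 p.2))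
    (hpde : ∀ t > (0 : ℝ), ∀ x : ℝ,
      mixedD u 1 0 t x + deriv (fun y => (u t y) ^ 2) x
        + β * mixedD u 0 3 t x - β * mixedD u 1 2 t x
        + β ^ 2 * mixedD u 1 4 t x = ε * mixedD u 0 2 t x)
    (hsq : ∀ T > (0 : ℝ), ∀ j k : ℕ, j + k ≤ 5 → ∀ s ∈ Set.Icc (0 : ℝ) T,
      MeasureTheory.Integrable (fun x : ℝ => (mixedD u j k s x) ^ 2))
    (hdec : ∀ T > (0 : ℝ), ∀ j k : ℕ, j + k ≤ 5 → ∀ δ > (0 : ℝ), ∃ M : ℝ,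
      ∀ x : ℝ, M ≤ |x| → ∀ s ∈ Set.Icc (0 : ℝ) T, |mixedD u j k s x| ≤ δ)
    {t : ℝ} (ht : 0 < t) :
    (∫ x, (mixedD u 0 0 t x) ^ 2 + β * (mixedD u 0 1 t x) ^ 2 + β ^ 2 * (mixedD u 0 2 t x) ^ 2)
      ≤ ∫ x, (mixedD u 0 0 0 x) ^ 2 + β * (mixedD u 0 1 0 x) ^ 2
          + β ^ 2 * (mixedD u 0 2 0 x) ^ 2 := by
  classical
  set W : ℝ → ℝ → ℝ := fun s x => (mixedD u 0 0 s x) ^ 2 + β * (mixedD u 0 1 s x) ^ 2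
    + β ^ 2 * (mixedD u 0 2 s x) ^ 2 with hW
  set dW : ℝ → ℝ → ℝ := fun s x =>
    2 * mixedD u 0 0 s x * mixedD u 1 0 s x
      + β * (2 * mixedD u 0 1 s x * mixedD u 1 1 s x)
      + β ^ 2 * (2 * mixedD u 0 2 s x * mixedD u 1 2 s x) with hdW
  set Φ : ℝ → ℝ → ℝ := fun s y =>
    2 * ε * (mixedD u 0 0 s y * mixedD u 0 1 s y)
      - 4 / 3 * (mixedD u 0 0 s y * (mixedD u 0 0 s y * mixedD u 0 0 s y))
      - 2 * β * (mixedD u 0 0 s y * mixedD u 0 2 s y)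
      + β * (mixedD u 0 1 s y * mixedD u 0 1 s y)
      + 2 * β * (mixedD u 0 0 s y * mixedD u 1 1 s y)
      - 2 * β ^ 2 * (mixedD u 0 0 s y * mixedD u 1 3 s y)
      + 2 * β ^ 2 * (mixedD u 0 1 s y * mixedD u 1 2 s y) with hΦ
  -- continuity facts
  have hWc : Continuous (fun p : ℝ × ℝ => W p.1 p.2) := by
    refine (((mixedD_continuous hu 0 0).pow 2).add
      (continuous_const.mul ((mixedD_continuous hu 0 1).pow 2))).add
      (continuous_const.mul ((mixedD_continuous hu 0 2).pow 2))
  have hdWc : Continuous (fun p : ℝ × ℝ => dW p.1 p.2) := by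
    refine (((continuous_const.mul (mixedD_continuous hu 0 0)).mul
      (mixedD_continuous hu 1 0)).add
      (continuous_const.mul ((continuous_const.mul (mixedD_continuous hu 0 1)).mul
        (mixedD_continuous hu 1 1)))).add
      (continuous_const.mul ((continuous_const.mul (mixedD_continuous hu 0 2)).mul
        (mixedD_continuous hu 1 2)))
  -- derivative in time of the truncated energy
  have hderiv : ∀ n : ℕ, ∀ s : ℝ,
      HasDerivAt (fun σ => ∫ x in (-(n:ℝ))..(n:ℝ), W σ x)
        (∫ x in (-(n:ℝ))..(n:ℝ), dW s x) s := by
    intro n s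
    have hnn : (-(n:ℝ)) ≤ (n:ℝ) := neg_le_self (Nat.cast_nonneg n)
    obtain ⟨C, hC⟩ := (isCompact_Icc.prod isCompact_Icc :
        IsCompact (Icc (s-1) (s+1) ×ˢ Icc (-(n:ℝ)) (n:ℝ))).exists_bound_of_continuousOn
      hdWc.continuousOn
    have hWσ : ∀ σ : ℝ, Continuous (fun x => W σ x) :=
      fun σ => hWc.comp (continuous_const.prodMk continuous_id)
    have hdWσ : ∀ σ : ℝ, Continuous (fun x => dW σ x) :=
      fun σ => hdWc.comp (continuous_const.prodMk continuous_id)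
    refine (intervalIntegral.hasDerivAt_integral_of_dominated_loc_of_deriv_le
      (F := fun σ x => W σ x) (F' := fun σ x => dW σ x) (bound := fun _ => C)
      (Metric.ball_mem_nhds s one_pos) (Eventually.of_forall fun σ => (hWσ σ).aestronglyMeasurable)
      ((hWσ s).intervalIntegrable _ _) ((hdWσ s).aestronglyMeasurable) ?_
      intervalIntegrable_const ?_).2
    · refine Eventually.of_forall fun x hx σ hσ => ?_
      rw [Set.uIoc_of_le hnn] at hx
      have hσ' : σ ∈ Icc (s-1) (s+1) := by
        have := abs_lt.mp (mem_ball_iff_norm.mp hσ)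
        constructor <;> [linarith [this.1]; linarith [this.2]]
      exact hC (σ, x) ⟨hσ', Ioc_subset_Icc_self hx⟩
    · refine Eventually.of_forall fun x hx σ hσ => ?_
      have h0 := (hasDerivAt_mixedD_t hu 0 0 σ x).pow 2
      have h1 := ((hasDerivAt_mixedD_t hu 0 1 σ x).pow 2).const_mul β
      have h2 := ((hasDerivAt_mixedD_t hu 0 2 σ x).pow 2).const_mul (β^2)
      have hh := (h0.add h1).add h2
      refine hh.congr_deriv ?_
      simp only [hdW]
      push_cast
      ring
  -- pointwise spatial derivative of Φ
  have hΦderiv : ∀ s ∈ Icc (0:ℝ) t, ∀ x : ℝ,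
      HasDerivAt (fun y => Φ s y) (dW s x + 2 * ε * (mixedD u 0 1 s x) ^ 2) x := by
    intro s hs x
    have d00 := hasDerivAt_mixedD_x hu 0 0 s x
    have d01 := hasDerivAt_mixedD_x hu 0 1 s x
    have d02 := hasDerivAt_mixedD_x hu 0 2 s x
    have d11 := hasDerivAt_mixedD_x hu 1 1 s x
    have d12 := hasDerivAt_mixedD_x hu 1 2 s x
    have d13 := hasDerivAt_mixedD_x hu 1 3 s x
    have hraw := ((((((((d00.mul d01).const_mul (2*ε)).sub
      ((d00.mul (d00.mul d00)).const_mul (4/3))).sub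
      ((d00.mul d02).const_mul (2*β))).add
      ((d01.mul d01).const_mul β)).add
      ((d00.mul d11).const_mul (2*β))).sub
      ((d00.mul d13).const_mul (2*β^2))).add
      ((d01.mul d12).const_mul (2*β^2)))
    refine hraw.congr_deriv ?_
    rw [hdW]
    simp only [Pi.mul_apply]
    rw [pde_solved hu hpde hs.1 x]
    ring
  -- the space-FTC identity
  have hDid : ∀ n : ℕ, ∀ s ∈ Icc (0:ℝ) t,
      (∫ x in (-(n:ℝ))..(n:ℝ), dW s x)
        = Φ s (n:ℝ) - Φ s (-(n:ℝ))
          - 2 * ε * (∫ x in (-(n:ℝ))..(n:ℝ), (mixedD u 0 1 s x) ^ 2) := by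
    intro n s hs
    have hcont1 : Continuous (fun x => dW s x) :=
      hdWc.comp (continuous_const.prodMk continuous_id)
    have hcont2 : Continuous (fun x => 2 * ε * (mixedD u 0 1 s x) ^ 2) :=
      continuous_const.mul ((mixedD_continuous_x hu 0 1 s).pow 2)
    have hFTCx := intervalIntegral.integral_eq_sub_of_hasDerivAt
      (f := fun y => Φ s y) (f' := fun x => dW s x + 2 * ε * (mixedD u 0 1 s x) ^ 2)
      (a := -(n:ℝ)) (b := (n:ℝ))
      (fun x _ => hΦderiv s hs x) ((hcont1.add hcont2).intervalIntegrable _ _)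
    rw [intervalIntegral.integral_add (hcont1.intervalIntegrable _ _)
      (hcont2.intervalIntegrable _ _)] at hFTCx
    have hpull : (∫ x in (-(n:ℝ))..(n:ℝ), 2 * ε * (mixedD u 0 1 s x) ^ 2)
        = 2 * ε * ∫ x in (-(n:ℝ))..(n:ℝ), (mixedD u 0 1 s x) ^ 2 :=
      intervalIntegral.integral_const_mul _ _
    rw [hpull] at hFTCx
    linarith
  -- FTC in time
  have hFTCt : ∀ n : ℕ,
      (∫ x in (-(n:ℝ))..(n:ℝ), W t x) - (∫ x in (-(n:ℝ))..(n:ℝ), W 0 x)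
        = ∫ s in (0:ℝ)..t, (∫ x in (-(n:ℝ))..(n:ℝ), dW s x) := by
    intro n
    have hDcont : Continuous (fun s => ∫ x in (-(n:ℝ))..(n:ℝ), dW s x) := by
      apply intervalIntegral.continuous_parametric_intervalIntegral_of_continuous'
      exact hdWc
    exact (intervalIntegral.integral_eq_sub_of_hasDerivAt
      (fun s _ => hderiv n s) (hDcont.intervalIntegrable _ _)).symm
  -- limits of truncated integrals
  have hWint : ∀ s, s ∈ Icc (0:ℝ) t → Integrable (W s) := by
    intro s hs
    exact ((hsq t ht 0 0 (by norm_num) s hs).add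
      ((hsq t ht 0 1 (by norm_num) s hs).const_mul β)).add
      ((hsq t ht 0 2 (by norm_num) s hs).const_mul (β^2))
  have hlim : ∀ s, s ∈ Icc (0:ℝ) t →
      Tendsto (fun n : ℕ => ∫ x in (-(n:ℝ))..(n:ℝ), W s x) atTop (𝓝 (∫ x, W s x)) := by
    intro s hs
    have hmono : Monotone (fun n : ℕ => Ioc (-(n:ℝ)) (n:ℝ)) := fun a b hab =>
      Ioc_subset_Ioc (neg_le_neg (Nat.cast_le.mpr hab)) (Nat.cast_le.mpr hab)
    have hunion : (⋃ n : ℕ, Ioc (-(n:ℝ)) (n:ℝ)) = univ := by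
      ext x
      simp only [mem_iUnion, mem_univ, iff_true, mem_Ioc]
      obtain ⟨n, hn⟩ := exists_nat_gt |x|
      obtain ⟨h1, h2⟩ := abs_lt.mp hn
      exact ⟨n, by linarith, by linarith⟩
    have h := tendsto_setIntegral_of_monotone (fun n : ℕ => measurableSet_Ioc) hmono
      (by rw [hunion]; exact (hWint s hs).integrableOn)
    rw [hunion, setIntegral_univ] at h
    refine h.congr fun n => ?_
    exact (intervalIntegral.integral_of_le (neg_le_self (Nat.cast_nonneg n))).symm
  -- uniform bounds
  obtain ⟨K0, hK0one, hK0⟩ := unif_bound hu hdec ht 0 0 (by norm_num)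
  obtain ⟨K1, hK1one, hK1⟩ := unif_bound hu hdec ht 0 1 (by norm_num)
  obtain ⟨K2, hK2one, hK2⟩ := unif_bound hu hdec ht 0 2 (by norm_num)
  obtain ⟨K3, hK3one, hK3⟩ := unif_bound hu hdec ht 1 1 (by norm_num)
  obtain ⟨K4, hK4one, hK4⟩ := unif_bound hu hdec ht 1 2 (by norm_num)
  obtain ⟨K5, hK5one, hK5⟩ := unif_bound hu hdec ht 1 3 (by norm_num)
  have hK0p : (0:ℝ) ≤ K0 := zero_le_one.trans hK0one
  have hK1p : (0:ℝ) ≤ K1 := zero_le_one.trans hK1one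
  have hK2p : (0:ℝ) ≤ K2 := zero_le_one.trans hK2one
  have hK3p : (0:ℝ) ≤ K3 := zero_le_one.trans hK3one
  have hK4p : (0:ℝ) ≤ K4 := zero_le_one.trans hK4one
  have hK5p : (0:ℝ) ≤ K5 := zero_le_one.trans hK5one
  set Cφ : ℝ := 2*ε*K1 + 4/3*(K0*K0) + 2*β*K2 + β*K1 + 2*β*K3 + 2*β^2*K5 + 2*β^2*K4 with hCφdef
  have hCφ : 0 ≤ Cφ := by positivity
  -- it suffices to prove the bound up to an arbitrary positive error
  refine le_of_forall_pos_le_add ?_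
  intro η hη
  set δ : ℝ := η / (2*Cφ*t + 1) with hδdef
  have hδ : 0 < δ := div_pos hη (by positivity)
  obtain ⟨M0, hM0⟩ := hdec t ht 0 0 (by norm_num) δ hδ
  obtain ⟨M1, hM1⟩ := hdec t ht 0 1 (by norm_num) δ hδ
  set M : ℝ := |M0| + |M1| with hMdef
  -- bound on the boundary terms
  have hΦb : ∀ s ∈ Icc (0:ℝ) t, ∀ y : ℝ, M ≤ |y| → |Φ s y| ≤ δ * Cφ := by
    intro s hs y hy
    have hyM0 : M0 ≤ |y| := le_trans (le_trans (le_abs_self M0)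
      (le_add_of_nonneg_right (abs_nonneg M1))) hy
    have hyM1 : M1 ≤ |y| := le_trans (le_trans (le_abs_self M1)
      (le_add_of_nonneg_left (abs_nonneg M0))) hy
    have a0 : |mixedD u 0 0 s y| ≤ δ := hM0 y hyM0 s hs
    have a1 : |mixedD u 0 1 s y| ≤ δ := hM1 y hyM1 s hs
    have b0 : |mixedD u 0 0 s y| ≤ K0 := hK0 s hs y
    have b1 : |mixedD u 0 1 s y| ≤ K1 := hK1 s hs y
    have b2 : |mixedD u 0 2 s y| ≤ K2 := hK2 s hs y
    have b3 : |mixedD u 1 1 s y| ≤ K3 := hK3 s hs y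
    have b4 : |mixedD u 1 2 s y| ≤ K4 := hK4 s hs y
    have b5 : |mixedD u 1 3 s y| ≤ K5 := hK5 s hs y
    have p1 := scale_bound (by positivity : (0:ℝ) ≤ 2*ε) (abs_mul_le' a0 b1)
    have p2 := scale_bound (by norm_num : (0:ℝ) ≤ 4/3) (abs_mul_le' a0 (abs_mul_le' b0 b0))
    have p3 := scale_bound (by positivity : (0:ℝ) ≤ 2*β) (abs_mul_le' a0 b2)
    have p4 := scale_bound hβ.le (abs_mul_le' a1 b1)
    have p5 := scale_bound (by positivity : (0:ℝ) ≤ 2*β) (abs_mul_le' a0 b3)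
    have p6 := scale_bound (by positivity : (0:ℝ) ≤ 2*β^2) (abs_mul_le' a0 b5)
    have p7 := scale_bound (by positivity : (0:ℝ) ≤ 2*β^2) (abs_mul_le' a1 b4)
    have hgoal : |Φ s y| ≤ 2*ε*(δ*K1) + 4/3*(δ*(K0*K0)) + 2*β*(δ*K2) + β*(δ*K1)
        + 2*β*(δ*K3) + 2*β^2*(δ*K5) + 2*β^2*(δ*K4) := by
      rw [hΦ, abs_le]
      constructor
      · simp only []
        linarith [p1.1, p1.2, p2.1, p2.2, p3.1, p3.2, p4.1, p4.2, p5.1, p5.2, p6.1, p6.2,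
          p7.1, p7.2]
      · simp only []
        linarith [p1.1, p1.2, p2.1, p2.2, p3.1, p3.2, p4.1, p4.2, p5.1, p5.2, p6.1, p6.2,
          p7.1, p7.2]
    calc |Φ s y| ≤ _ := hgoal
      _ = δ * Cφ := by rw [hCφdef]; ring
  -- per-n estimate
  have hEn : ∀ n : ℕ, M ≤ (n:ℝ) →
      (∫ x in (-(n:ℝ))..(n:ℝ), W t x) ≤ (∫ x in (-(n:ℝ))..(n:ℝ), W 0 x) + η := by
    intro n hn
    have hnn : (-(n:ℝ)) ≤ (n:ℝ) := neg_le_self (Nat.cast_nonneg n)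
    have hDcont : Continuous (fun s => ∫ x in (-(n:ℝ))..(n:ℝ), dW s x) := by
      apply intervalIntegral.continuous_parametric_intervalIntegral_of_continuous'
      exact hdWc
    have hDb : ∀ s ∈ Icc (0:ℝ) t, (∫ x in (-(n:ℝ))..(n:ℝ), dW s x) ≤ 2*(δ*Cφ) := by
      intro s hs
      rw [hDid n s hs]
      have h1 : |Φ s (n:ℝ)| ≤ δ*Cφ := hΦb s hs (n:ℝ)
        (by rwa [abs_of_nonneg (Nat.cast_nonneg n)])
      have h2 : |Φ s (-(n:ℝ))| ≤ δ*Cφ := hΦb s hs (-(n:ℝ))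
        (by rwa [abs_neg, abs_of_nonneg (Nat.cast_nonneg n)])
      have h3 : 0 ≤ ∫ x in (-(n:ℝ))..(n:ℝ), (mixedD u 0 1 s x) ^ 2 :=
        intervalIntegral.integral_nonneg hnn (fun x _ => sq_nonneg _)
      have h4 := abs_le.mp h1
      have h5 := abs_le.mp h2
      nlinarith [mul_nonneg hε.le h3]
    have hmon : (∫ s in (0:ℝ)..t, (∫ x in (-(n:ℝ))..(n:ℝ), dW s x))
        ≤ ∫ _ in (0:ℝ)..t, 2*(δ*Cφ) := by
      apply intervalIntegral.integral_mono_on ht.le (hDcont.intervalIntegrable _ _)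
        intervalIntegrable_const hDb
    have hconst : (∫ _ in (0:ℝ)..t, 2*(δ*Cφ)) = t * (2*(δ*Cφ)) := by
      rw [intervalIntegral.integral_const]; simp
    have hsmall : t * (2*(δ*Cφ)) ≤ η := by
      have : t * (2*(δ*Cφ)) = (2*Cφ*t) * (η/(2*Cφ*t+1)) := by rw [hδdef]; ring
      rw [this]
      calc (2*Cφ*t) * (η/(2*Cφ*t+1)) ≤ (2*Cφ*t+1) * (η/(2*Cφ*t+1)) :=
            mul_le_mul_of_nonneg_right (by linarith) (by positivity)
        _ = η := by field_simp
    have := hFTCt n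
    linarith [hmon, hconst ▸ hmon]
  -- pass to the limit
  have hlimt := hlim t ⟨le_refl 0 |>.trans ht.le, le_refl t⟩
  have hlim0 := hlim 0 ⟨le_refl 0, ht.le⟩
  refine le_of_tendsto_of_tendsto hlimt (hlim0.add_const η) ?_
  rw [Filter.EventuallyLE, eventually_atTop]
  exact ⟨⌈M⌉₊, fun n hn => hEn n (le_trans (Nat.le_ceil M) (Nat.cast_le.mpr hn))⟩


end RKdV

open RKdV

/-- `L^∞` bound on `u` for the Rosenau–KdV–RLW approximation (★). -/
theorem u_linfty_bound_KdVRLW (ε β C0 : ℝ) (hε : 0 < ε) (hβ : 0 < β) (hC0 : 0 < C0)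
    (u : ℝ → ℝ → ℝ) (hu : IsAdmissibleKdVRLW ε β u)
    (hinit : sqL2 (u 0) + β * sqL2 (fun x => mixedD u 0 1 0 x)
      + β ^ 2 * sqL2 (fun x => mixedD u 0 2 0 x) ≤ C0) :
    ∀ t > (0 : ℝ), ∀ x : ℝ,
      (u t x) ^ 2 ≤ 2 * nL2 (u t) * nL2 (fun y => mixedD u 0 1 t y) ∧
      |u t x| ≤ Real.sqrt (2 * C0) * β ^ (-(1 / 4 : ℝ)) := by
  intro t ht x
  obtain ⟨hsm, hpde, hsq, hdec⟩ := hu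
  have htmem : t ∈ Icc (0:ℝ) t := ⟨ht.le, le_refl t⟩
  have h0mem : (0:ℝ) ∈ Icc (0:ℝ) t := ⟨le_refl 0, ht.le⟩
  -- the function at time t and its derivative
  have hfun : (fun y => mixedD u 0 0 t y) = fun y => u t y := funext fun y => mixedD_zero_zero t y
  have hf : Continuous (fun y => u t y) := hfun ▸ mixedD_continuous_x hsm 0 0 t
  have hg : Continuous (fun y => mixedD u 0 1 t y) := mixedD_continuous_x hsm 0 1 t
  have hder : ∀ y, HasDerivAt (fun y => u t y) (mixedD u 0 1 t y) y := by
    intro y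
    have := hasDerivAt_mixedD_x hsm 0 0 t y
    rwa [hfun] at this
  have hf2 : Integrable (fun y => (u t y) ^ 2) := by
    have := hsq t ht 0 0 (by norm_num) t htmem
    simpa [mixedD_zero_zero] using this
  have hg2 : Integrable (fun y => (mixedD u 0 1 t y) ^ 2) := hsq t ht 0 1 (by norm_num) t htmem
  have hdecay : Tendsto (fun y => u t y) atBot (nhds 0) := by
    rw [NormedAddCommGroup.tendsto_nhds_zero]
    intro δ hδ
    obtain ⟨M, hM⟩ := hdec t ht 0 0 (by norm_num) (δ/2) (by linarith)
    rw [eventually_atBot]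
    refine ⟨-(|M| + 1), fun y hy => ?_⟩
    have hyM : M ≤ |y| := by
      have h1 : |M| + 1 ≤ -y := by linarith
      have h2 : -y ≤ |y| := neg_le_abs y
      linarith [le_abs_self M]
    have := hM y hyM t htmem
    rw [Real.norm_eq_abs]
    calc |u t y| = |mixedD u 0 0 t y| := by rw [mixedD_zero_zero]
      _ ≤ δ/2 := this
      _ < δ := by linarith
  have hagmon := agmon (fun y => u t y) (fun y => mixedD u 0 1 t y) hf hg hder hf2 hg2 hdecay x
  have part1 : (u t x) ^ 2 ≤ 2 * nL2 (u t) * nL2 (fun y => mixedD u 0 1 t y) := by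
    simpa [nL2] using hagmon
  refine ⟨part1, ?_⟩
  -- energy bound
  have hE := energy_mono hε hβ hsm hpde hsq hdec ht
  have hsplit : ∀ s, s ∈ Icc (0:ℝ) t →
      (∫ x, (mixedD u 0 0 s x) ^ 2 + β * (mixedD u 0 1 s x) ^ 2
        + β ^ 2 * (mixedD u 0 2 s x) ^ 2)
      = (∫ x, (mixedD u 0 0 s x) ^ 2) + β * (∫ x, (mixedD u 0 1 s x) ^ 2)
        + β ^ 2 * (∫ x, (mixedD u 0 2 s x) ^ 2) := by
    intro s hs
    have i0 : Integrable (fun x => (mixedD u 0 0 s x) ^ 2) := hsq t ht 0 0 (by norm_num) s hs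
    have i1 : Integrable (fun x => β * (mixedD u 0 1 s x) ^ 2) :=
      (hsq t ht 0 1 (by norm_num) s hs).const_mul β
    have i2 : Integrable (fun x => β ^ 2 * (mixedD u 0 2 s x) ^ 2) :=
      (hsq t ht 0 2 (by norm_num) s hs).const_mul (β^2)
    have i01 : Integrable (fun x => (mixedD u 0 0 s x) ^ 2 + β * (mixedD u 0 1 s x) ^ 2) :=
      i0.add i1
    rw [integral_add i01 i2, integral_add i0 i1, integral_const_mul, integral_const_mul]
  rw [hsplit t htmem, hsplit 0 h0mem] at hE
  set A := ∫ x, (mixedD u 0 0 t x) ^ 2 with hA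
  set B := ∫ x, (mixedD u 0 1 t x) ^ 2 with hB
  have hA0 : 0 ≤ A := integral_nonneg fun x => sq_nonneg _
  have hB0 : 0 ≤ B := integral_nonneg fun x => sq_nonneg _
  have hC2 : 0 ≤ ∫ x, (mixedD u 0 2 t x) ^ 2 := integral_nonneg fun x => sq_nonneg _
  have hE0 : (∫ x, (mixedD u 0 0 0 x) ^ 2) + β * (∫ x, (mixedD u 0 1 0 x) ^ 2)
      + β ^ 2 * (∫ x, (mixedD u 0 2 0 x) ^ 2) ≤ C0 := by
    have h1 : (∫ x, (mixedD u 0 0 0 x) ^ 2) = sqL2 (u 0) := by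
      simp only [sqL2, mixedD_zero_zero]
    have h2 : (∫ x, (mixedD u 0 1 0 x) ^ 2) = sqL2 (fun x => mixedD u 0 1 0 x) := rfl
    have h3 : (∫ x, (mixedD u 0 2 0 x) ^ 2) = sqL2 (fun x => mixedD u 0 2 0 x) := rfl
    rw [h1, h2, h3]; exact hinit
  have hABC0 : A + β * B ≤ C0 := by nlinarith [mul_nonneg (sq_nonneg β) hC2]
  -- Agmon + energy
  have hsqβ : 0 < Real.sqrt β := Real.sqrt_pos.mpr hβ
  have hAB : Real.sqrt β * (2 * Real.sqrt A * Real.sqrt B) ≤ A + β * B := by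
    nlinarith [Real.sq_sqrt hA0, Real.sq_sqrt hB0, Real.sq_sqrt hβ.le,
      Real.sqrt_nonneg A, Real.sqrt_nonneg B, Real.sqrt_nonneg β,
      sq_nonneg (Real.sqrt A - Real.sqrt β * Real.sqrt B)]
  have hu2 : (u t x) ^ 2 ≤ C0 / Real.sqrt β := by
    have hAu : A = ∫ x, (u t x) ^ 2 := by rw [hA]; simp only [mixedD_zero_zero]
    have hnl : nL2 (u t) = Real.sqrt A := by
      rw [show nL2 (u t) = Real.sqrt (∫ x, (u t x) ^ 2) from rfl, hAu]
    have hnl2 : nL2 (fun y => mixedD u 0 1 t y) = Real.sqrt B := rfl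
    rw [hnl, hnl2] at part1
    rw [le_div_iff₀ hsqβ]
    calc (u t x) ^ 2 * Real.sqrt β = Real.sqrt β * (u t x) ^ 2 := by ring
      _ ≤ Real.sqrt β * (2 * Real.sqrt A * Real.sqrt B) := by
          apply mul_le_mul_of_nonneg_left part1 hsqβ.le
      _ ≤ A + β * B := hAB
      _ ≤ C0 := hABC0
  -- convert to the rpow bound
  have hR : (Real.sqrt (2 * C0) * β ^ (-(1/4 : ℝ))) ^ 2 = 2 * C0 * β ^ (-(1/2 : ℝ)) := by
    rw [mul_pow, Real.sq_sqrt (by linarith), ← Real.rpow_natCast (β ^ (-(1/4 : ℝ))) 2,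
      ← Real.rpow_mul hβ.le]
    norm_num
  have hCβ : C0 / Real.sqrt β ≤ 2 * C0 * β ^ (-(1/2 : ℝ)) := by
    rw [Real.sqrt_eq_rpow, div_eq_mul_inv, ← Real.rpow_neg hβ.le]
    have : (0:ℝ) ≤ β ^ (-(1/2 : ℝ)) := Real.rpow_nonneg hβ.le _
    nlinarith
  calc |u t x| = Real.sqrt ((u t x) ^ 2) := (Real.sqrt_sq_eq_abs _).symm
    _ ≤ Real.sqrt (2 * C0 * β ^ (-(1/2 : ℝ))) := Real.sqrt_le_sqrt (hu2.trans hCβ)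
    _ = Real.sqrt ((Real.sqrt (2 * C0) * β ^ (-(1/4 : ℝ))) ^ 2) := by rw [hR]
    _ = Real.sqrt (2 * C0) * β ^ (-(1/4 : ℝ)) := Real.sqrt_sq (by positivity)


end
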